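/- arXiv:0901.2777 — 2 statements merged into one kernel-verified Lean document; each statement's English description precedes it below -/
import Mathlib

section
/- Let β ∈ (0,1) and H : [0,1) → [0,∞) be increasing. If there is c₁ ≥ 1 with Aₙ(H+1) ≥ 1/(c₁√(n^β)) for all n ∈ ℕ, then there is c₂ ≥ 1 with Aₙ(H) ≥ 1/(c₂√(n^β)) for all n ∈ ℕ. -/
open MeasureTheory Set

/-- A partition `0 = t₀ < t₁ < ⋯ < tₙ = 1` of `[0,1]`. -/
def IsPartition (n : ℕ) (t : ℕ → ℝ) : Prop :=
  t 0 = 0 ∧ t n = 1 ∧ ∀ i < n, t i < t (i + 1)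

/-- `A(H,τ)² = ∑_{i=1}^n ∫_{t_{i-1}}^{t_i} (tᵢ − s) H(s)² ds`. -/
noncomputable def partErr (H : ℝ → ℝ) (n : ℕ) (t : ℕ → ℝ) : ℝ :=
  ∑ i ∈ Finset.range n, ∫ s in (t i)..(t (i + 1)), (t (i + 1) - s) * H s ^ 2

/-- `Aₙ(H) = inf_{τ ∈ 𝒯ₙ} A(H,τ)`. -/
noncomputable def An (H : ℝ → ℝ) (n : ℕ) : ℝ :=
  sInf { x | ∃ t : ℕ → ℝ, IsPartition n t ∧ x = Real.sqrt (partErr H n t) }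

/-!
Refine an arbitrary partition `τ` with `n` cells by cutting each cell, of length `ℓ`, into
`⌈ℓ M⌉` equal pieces, where `M ≍ n`. The refinement has `N ≤ M + n ≤ 2M` cells, mesh at most
`1/M`, and no larger error for `H`, because moving the right endpoint of a cell closer only
decreases the weight `tᵢ - s`. On the refinement, `(H + 1)² ≤ 2H² + 2` gives
`A(H+1)² ≤ 2 A(H)² + ∑ (Δtᵢ)² ≤ 2 A(H)² + 1/M`, while the hypothesis gives
`A(H+1)² ≥ 1/(c₁² N^β)`. Since `β < 1`, taking `M = n₀ n` with `n₀^(1-β) ≥ 4c₁²` makes `1/M`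
at most half of `1/(2c₁² M^β)`, which leaves `A(H,τ)² ≥ 1/(8c₁² n₀^β n^β)`.

Integrability of `(1 - s) H(s)²` on `[0,1]` comes from the case `n = 1` of the hypothesis:
there `A₁(H+1)² = ∫₀¹ (1 - s)(H + 1)²`, which would be the junk value `0` for a
non-integrable integrand.
-/

open scoped Interval

section Integrability

variable {G : ℝ → ℝ}

theorem intervalIntegrable_sub_mul_sq
    (hG : IntervalIntegrable (fun s => (1 - s) * G s ^ 2) volume 0 1)
    {w x y : ℝ} (hx : 0 ≤ x) (hxy : x ≤ y) (hyw : y ≤ w) (hw : w ≤ 1) :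
    IntervalIntegrable (fun s => (w - s) * G s ^ 2) volume x y := by
  have hGxy : IntervalIntegrable (fun s => (1 - s) * G s ^ 2) volume x y := by
    refine hG.mono_set ?_
    rw [uIcc_of_le hxy, uIcc_of_le zero_le_one]
    exact Icc_subset_Icc hx (hyw.trans hw)
  have hw_sub : ∀ s ∈ Ι x y, 0 ≤ w - s ∧ w - s ≤ 1 - s := fun s hs => by
    rw [uIoc_of_le hxy] at hs
    constructor <;> linarith [hs.2]
  -- at `s = 1` both sides vanish, since then `w = 1`
  have heq : ∀ s ∈ Ι x y, (w - s) / (1 - s) * ((1 - s) * G s ^ 2) = (w - s) * G s ^ 2 := by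
    intro s hs
    rcases eq_or_ne (1 - s) 0 with h1 | h1
    · have : w - s = 0 := le_antisymm (h1 ▸ (hw_sub s hs).2) (hw_sub s hs).1
      simp [this, h1]
    · field_simp
  refine hGxy.mono_fun ?_ (ae_restrict_of_forall_mem measurableSet_uIoc fun s hs => ?_)
  · refine (AEStronglyMeasurable.mul ?_ hGxy.def'.aestronglyMeasurable).congr
      (ae_restrict_of_forall_mem measurableSet_uIoc heq)
    exact (by fun_prop : Measurable fun s : ℝ => (w - s) / (1 - s)).aestronglyMeasurable
  · obtain ⟨h0, h1⟩ := hw_sub s hs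
    simp only [Real.norm_eq_abs, abs_mul, abs_of_nonneg h0, abs_of_nonneg (h0.trans h1)]
    gcongr

theorem intervalIntegrable_one_sub_mul_sq_of_add_one (hpos : ∀ t ∈ Ico (0 : ℝ) 1, 0 ≤ G t)
    (hG : IntervalIntegrable (fun s => (1 - s) * (G s + 1) ^ 2) volume 0 1) :
    IntervalIntegrable (fun s => (1 - s) * G s ^ 2) volume 0 1 := by
  have hbound : ∀ s ∈ Ι (0 : ℝ) 1,
      0 ≤ (1 - s) * G s ^ 2 ∧ (1 - s) * G s ^ 2 ≤ (1 - s) * (G s + 1) ^ 2 := by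
    intro s hs
    rw [uIoc_of_le zero_le_one] at hs
    rcases hs.2.eq_or_lt with rfl | hs1
    · simp
    have hGs := hpos s ⟨hs.1.le, hs1⟩
    exact ⟨by positivity, by gcongr; linarith⟩
  -- `G` is recovered from the integrand as `√(f s / (1 - s)) - 1`, which makes it measurable
  have heq : ∀ s ∈ Ι (0 : ℝ) 1,
      (1 - s) * (√((1 - s) * (G s + 1) ^ 2 / (1 - s)) - 1) ^ 2 = (1 - s) * G s ^ 2 := by
    intro s hs
    rw [uIoc_of_le zero_le_one] at hs
    rcases hs.2.eq_or_lt with rfl | hs1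
    · simp
    rw [mul_div_cancel_left₀ _ (by linarith), Real.sqrt_sq (by linarith [hpos s ⟨hs.1.le, hs1⟩]),
      add_sub_cancel_right]
  refine hG.mono_fun ?_ (ae_restrict_of_forall_mem measurableSet_uIoc fun s hs => ?_)
  · have hm := hG.def'.aestronglyMeasurable.aemeasurable
    refine AEMeasurable.aestronglyMeasurable (AEMeasurable.congr ?_
      (ae_restrict_of_forall_mem measurableSet_uIoc heq))
    fun_prop
  · obtain ⟨h0, hle⟩ := hbound s hs
    simp only [Real.norm_of_nonneg h0, Real.norm_of_nonneg (h0.trans hle)]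
    exact hle

end Integrability

section Partitions

variable {n : ℕ} {t : ℕ → ℝ}

theorem IsPartition.one_le (ht : IsPartition n t) : 1 ≤ n := by
  refine Nat.one_le_iff_ne_zero.2 ?_
  rintro rfl
  exact zero_ne_one (ht.1.symm.trans ht.2.1)

theorem IsPartition.monotoneOn (ht : IsPartition n t) : MonotoneOn t (Iic n) :=
  monotoneOn_of_le_succ ordConnected_Iic fun i _ _ hi => (ht.2.2 i (Order.succ_le_iff.1 hi)).le

theorem IsPartition.mem_Icc (ht : IsPartition n t) {j : ℕ} (hj : j ≤ n) : t j ∈ Icc 0 1 := by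
  rw [← ht.1, ← ht.2.1]
  exact ⟨ht.monotoneOn (Nat.zero_le n) hj (Nat.zero_le j), ht.monotoneOn hj (le_refl n) hj⟩

theorem isPartition_uniform (hn : 1 ≤ n) : IsPartition n fun i => i / n := by
  have hn' : (0 : ℝ) < n := by exact_mod_cast hn
  refine ⟨by simp, div_self hn'.ne', fun i _ => ?_⟩
  exact div_lt_div_of_pos_right (by push_cast; linarith) hn'

end Partitions

section Infimum

variable {G : ℝ → ℝ} {n : ℕ}

theorem An_le_sqrt_partErr {t : ℕ → ℝ} (ht : IsPartition n t) : An G n ≤ √(partErr G n t) :=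
  csInf_le ⟨0, by rintro _ ⟨_, _, rfl⟩; positivity⟩ ⟨t, ht, rfl⟩

theorem le_An {x : ℝ} (hn : 1 ≤ n) (h : ∀ t, IsPartition n t → x ≤ √(partErr G n t)) :
    x ≤ An G n :=
  le_csInf ⟨_, _, isPartition_uniform hn, rfl⟩ (by rintro _ ⟨t, ht, rfl⟩; exact h t ht)

theorem An_one : An G 1 = √(∫ s in (0 : ℝ)..1, (1 - s) * G s ^ 2) := by
  have hpart : ∀ t, IsPartition 1 t → partErr G 1 t = ∫ s in (0 : ℝ)..1, (1 - s) * G s ^ 2 :=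
    fun t ht => by simp [partErr, ht.1, ht.2.1]
  refine le_antisymm ?_ (le_An le_rfl fun t ht => by rw [hpart t ht])
  rw [← hpart _ (isPartition_uniform le_rfl)]
  exact An_le_sqrt_partErr (isPartition_uniform le_rfl)

theorem intervalIntegrable_of_An_one_pos (h : 0 < An G 1) :
    IntervalIntegrable (fun s => (1 - s) * G s ^ 2) volume 0 1 := by
  by_contra hG
  rw [An_one, intervalIntegral.integral_undef hG, Real.sqrt_zero] at h
  exact h.false

theorem one_div_mul_sqrt_le_sqrt_iff {c x y : ℝ} (hc : 0 < c) (hx : 0 < x) :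
    1 / (c * √x) ≤ √y ↔ 1 / (c ^ 2 * x) ≤ y := by
  rw [Real.le_sqrt' (by positivity), div_pow, mul_pow, Real.sq_sqrt hx.le, one_pow]

end Infimum

section Estimates

variable {G : ℝ → ℝ} (hG : IntervalIntegrable (fun s => (1 - s) * G s ^ 2) volume 0 1)
include hG

theorem partErr_le_integral {m : ℕ} {p : ℕ → ℝ} (hp : MonotoneOn p (Iic m)) (h0 : 0 ≤ p 0)
    (h1 : p m ≤ 1) : partErr G m p ≤ ∫ s in p 0..p m, (p m - s) * G s ^ 2 := by
  have hle : ∀ k < m, p 0 ≤ p k ∧ p k ≤ p (k + 1) ∧ p (k + 1) ≤ p m := fun k hk =>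
    ⟨hp (Nat.zero_le m) hk.le (Nat.zero_le k), hp hk.le hk (Nat.le_succ k),
      hp hk (le_refl m) hk⟩
  have hint : ∀ k < m, IntervalIntegrable (fun s => (p m - s) * G s ^ 2) volume (p k) (p (k + 1)) :=
    fun k hk => intervalIntegrable_sub_mul_sq hG (h0.trans (hle k hk).1) (hle k hk).2.1
      (hle k hk).2.2 h1
  rw [← intervalIntegral.sum_integral_adjacent_intervals hint]
  refine Finset.sum_le_sum fun k hk => ?_
  obtain ⟨hk0, hk1, hk2⟩ := hle k (Finset.mem_range.1 hk)
  refine intervalIntegral.integral_mono_on hk1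
    (intervalIntegrable_sub_mul_sq hG (h0.trans hk0) hk1 le_rfl (hk2.trans h1))
    (hint k (Finset.mem_range.1 hk)) fun s _ => ?_
  gcongr

theorem integral_sub_mul_add_one_sq_le
    (hG1 : IntervalIntegrable (fun s => (1 - s) * (G s + 1) ^ 2) volume 0 1)
    {a b : ℝ} (ha : 0 ≤ a) (hab : a ≤ b) (hb : b ≤ 1) :
    ∫ s in a..b, (b - s) * (G s + 1) ^ 2 ≤ 2 * (∫ s in a..b, (b - s) * G s ^ 2) + (b - a) ^ 2 := by
  have hint := intervalIntegrable_sub_mul_sq hG ha hab le_rfl hb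
  calc ∫ s in a..b, (b - s) * (G s + 1) ^ 2
      ≤ ∫ s in a..b, (2 * ((b - s) * G s ^ 2) + 2 * (b - s)) := by
        refine intervalIntegral.integral_mono_on hab
          (intervalIntegrable_sub_mul_sq hG1 ha hab le_rfl hb)
          ((hint.const_mul 2).add (Continuous.intervalIntegrable (by fun_prop) _ _)) fun s hs => ?_
        have : 0 ≤ b - s := by linarith [hs.2]
        nlinarith [sq_nonneg (G s - 1)]
    _ = 2 * (∫ s in a..b, (b - s) * G s ^ 2) + (b - a) ^ 2 := by
        rw [intervalIntegral.integral_add (hint.const_mul 2)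
          (Continuous.intervalIntegrable (by fun_prop) _ _), intervalIntegral.integral_const_mul,
          intervalIntegral.integral_const_mul, intervalIntegral.integral_sub
            intervalIntegrable_const intervalIntegral.intervalIntegrable_id]
        simp
        ring

theorem partErr_add_one_le
    (hG1 : IntervalIntegrable (fun s => (1 - s) * (G s + 1) ^ 2) volume 0 1)
    {N : ℕ} {t : ℕ → ℝ} {δ : ℝ} (ht : IsPartition N t) (hmesh : ∀ j < N, t (j + 1) - t j ≤ δ) :
    partErr (fun s => G s + 1) N t ≤ 2 * partErr G N t + δ := by
  have hstep : ∀ j ∈ Finset.range N, 0 ≤ t (j + 1) - t j := fun j hj =>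
    sub_nonneg.2 (ht.2.2 j (Finset.mem_range.1 hj)).le
  calc partErr (fun s => G s + 1) N t
      ≤ ∑ j ∈ Finset.range N, (2 * (∫ s in t j..t (j + 1), (t (j + 1) - s) * G s ^ 2)
          + (t (j + 1) - t j) ^ 2) := by
        refine Finset.sum_le_sum fun j hj => ?_
        have hj := Finset.mem_range.1 hj
        exact integral_sub_mul_add_one_sq_le hG hG1 (ht.mem_Icc hj.le).1 (ht.2.2 j hj).le
          (ht.mem_Icc hj).2
    _ = 2 * partErr G N t + ∑ j ∈ Finset.range N, (t (j + 1) - t j) * (t (j + 1) - t j) := by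
        simp only [Finset.sum_add_distrib, ← Finset.mul_sum, sq, partErr]
    _ ≤ 2 * partErr G N t + ∑ j ∈ Finset.range N, δ * (t (j + 1) - t j) := by
        gcongr with j hj
        · exact hstep j hj
        · exact hmesh j (Finset.mem_range.1 hj)
    _ = 2 * partErr G N t + δ := by
        rw [← Finset.mul_sum, Finset.sum_range_sub t, ht.1, ht.2.1, sub_zero, mul_one]

end Estimates

section Refinement

noncomputable def appendUniform (t : ℕ → ℝ) (N m : ℕ) (d : ℝ) (j : ℕ) : ℝ :=
  if j ≤ N then t j else t N + (j - N) * ((d - t N) / m)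

variable {t : ℕ → ℝ} {N m : ℕ} {d : ℝ}

theorem appendUniform_of_le {j : ℕ} (hj : j ≤ N) : appendUniform t N m d j = t j :=
  if_pos hj

theorem appendUniform_add (r : ℕ) :
    appendUniform t N m d (N + r) = t N + r * ((d - t N) / m) := by
  rcases Nat.eq_zero_or_pos r with rfl | hr
  · simp [appendUniform_of_le]
  · rw [appendUniform, if_neg (by omega)]
    push_cast
    ring

theorem appendUniform_succ_sub {j : ℕ} (hj : N ≤ j) :
    appendUniform t N m d (j + 1) - appendUniform t N m d j = (d - t N) / m := by
  obtain ⟨r, rfl⟩ := Nat.exists_eq_add_of_le hj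
  rw [add_assoc, appendUniform_add, appendUniform_add]
  push_cast
  ring

theorem appendUniform_add_self (hm : m ≠ 0) : appendUniform t N m d (N + m) = d := by
  rw [appendUniform_add]
  field_simp
  ring

theorem partErr_appendUniform_le {G : ℝ → ℝ}
    (hG : IntervalIntegrable (fun s => (1 - s) * G s ^ 2) volume 0 1) (hm : m ≠ 0)
    (h0 : 0 ≤ t N) (hd : t N ≤ d) (hd1 : d ≤ 1) :
    partErr G (N + m) (appendUniform t N m d) ≤
      partErr G N t + ∫ s in t N..d, (d - s) * G s ^ 2 := by
  set p : ℕ → ℝ := fun r => t N + r * ((d - t N) / m)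
  have hp : Monotone p := fun r r' hrr' => by
    have : (0 : ℝ) ≤ (d - t N) / m := div_nonneg (sub_nonneg.2 hd) m.cast_nonneg
    simp only [p]
    gcongr
  have hp0 : p 0 = t N := by simp [p]
  have hpm : p m = d := (appendUniform_add m).symm.trans (appendUniform_add_self hm)
  have hprefix : partErr G N (appendUniform t N m d) = partErr G N t :=
    Finset.sum_congr rfl fun j hj => by
      have hj := Finset.mem_range.1 hj
      rw [appendUniform_of_le hj.le, appendUniform_of_le hj]
  have hsuffix : ∑ r ∈ Finset.range m, ∫ s in appendUniform t N m d (N + r)..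
      appendUniform t N m d (N + r + 1), (appendUniform t N m d (N + r + 1) - s) * G s ^ 2 =
      partErr G m p := by
    simp only [add_assoc, appendUniform_add]
    rfl
  rw [partErr, Finset.sum_range_add, ← partErr, hprefix, hsuffix]
  gcongr
  have := partErr_le_integral hG (hp.monotoneOn _) (hp0 ▸ h0) (hpm ▸ hd1)
  rwa [hp0, hpm] at this

theorem exists_fine_refinement {G : ℝ → ℝ}
    (hG : IntervalIntegrable (fun s => (1 - s) * G s ^ 2) volume 0 1)
    {n : ℕ} {τ : ℕ → ℝ} (hτ : IsPartition n τ) {M : ℝ} (hM : 0 < M) :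
    ∃ (N : ℕ) (t : ℕ → ℝ), IsPartition N t ∧ (∀ j < N, t (j + 1) - t j ≤ 1 / M) ∧ (N : ℝ) ≤ M + n ∧
      partErr G N t ≤ partErr G n τ := by
  suffices h : ∀ k ≤ n, ∃ (N : ℕ) (t : ℕ → ℝ), t 0 = 0 ∧ t N = τ k ∧ (∀ j < N, t j < t (j + 1)) ∧
      (∀ j < N, t (j + 1) - t j ≤ 1 / M) ∧ (N : ℝ) ≤ M * τ k + k ∧
      partErr G N t ≤ partErr G k τ by
    obtain ⟨N, t, h0, hN, hlt, hmesh, hcard, hle⟩ := h n le_rfl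
    rw [hτ.2.1] at hN hcard
    exact ⟨N, t, ⟨h0, hN, hlt⟩, hmesh, by linarith, hle⟩
  intro k
  induction k with
  | zero => exact fun _ => ⟨0, fun _ => 0, rfl, hτ.1.symm, by simp, by simp, by simp [hτ.1],
      by simp [partErr]⟩
  | succ k ih =>
    intro hk
    obtain ⟨N, t, h0, hN, hlt, hmesh, hcard, hle⟩ := ih (Nat.le_of_succ_le hk)
    have hcd : τ k < τ (k + 1) := hτ.2.2 k hk
    set m := ⌈(τ (k + 1) - τ k) * M⌉₊
    have hm : 0 < m := Nat.ceil_pos.2 (mul_pos (sub_pos.2 hcd) hM)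
    have hstep : (τ (k + 1) - τ k) / m ≤ 1 / M := by
      rw [div_le_div_iff₀ (by exact_mod_cast hm) hM, one_mul]
      exact Nat.le_ceil _
    refine ⟨N + m, appendUniform t N m (τ (k + 1)), by rw [appendUniform_of_le N.zero_le, h0],
      appendUniform_add_self hm.ne', fun j hj => ?_, fun j hj => ?_, ?_, ?_⟩
    · rcases lt_or_ge j N with hjN | hjN
      · rw [appendUniform_of_le hjN.le, appendUniform_of_le hjN]
        exact hlt j hjN
      · rw [← sub_pos, appendUniform_succ_sub hjN, hN]
        exact div_pos (sub_pos.2 hcd) (by exact_mod_cast hm)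
    · rcases lt_or_ge j N with hjN | hjN
      · rw [appendUniform_of_le hjN.le, appendUniform_of_le hjN]
        exact hmesh j hjN
      · rw [appendUniform_succ_sub hjN, hN]
        exact hstep
    · have := Nat.ceil_lt_add_one (mul_pos (sub_pos.2 hcd) hM).le
      push_cast
      nlinarith
    · have hk0 := (hτ.mem_Icc (Nat.le_of_succ_le hk)).1
      calc partErr G (N + m) (appendUniform t N m (τ (k + 1)))
          ≤ partErr G N t + ∫ s in t N..τ (k + 1), (τ (k + 1) - s) * G s ^ 2 :=
            partErr_appendUniform_le hG hm.ne' (hN ▸ hk0) (hN ▸ hcd.le) (hτ.mem_Icc hk).2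
        _ ≤ partErr G k τ + ∫ s in τ k..τ (k + 1), (τ (k + 1) - s) * G s ^ 2 := by
            rw [hN]; gcongr
        _ = partErr G (k + 1) τ := (Finset.sum_range_succ _ _).symm

end Refinement

theorem one_div_le_of_le_two_mul_add {β c M N P Q : ℝ} (hβ : β ∈ Ioo (0 : ℝ) 1) (hc : 0 < c)
    (hN : 0 < N) (hNM : N ≤ 2 * M) (hM : 4 * c ^ 2 ≤ M ^ (1 - β))
    (hQ : 1 / (c ^ 2 * N ^ β) ≤ Q) (hQP : Q ≤ 2 * P + 1 / M) :
    1 / (8 * c ^ 2 * M ^ β) ≤ P := by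
  have hM0 : 0 < M := by linarith
  have hNβ : N ^ β ≤ 2 * M ^ β := calc
    N ^ β ≤ (2 * M) ^ β := Real.rpow_le_rpow hN.le hNM hβ.1.le
    _ = 2 ^ β * M ^ β := Real.mul_rpow zero_le_two hM0.le
    _ ≤ 2 ^ (1 : ℝ) * M ^ β := by gcongr; exacts [one_le_two, hβ.2.le]
    _ = 2 * M ^ β := by rw [Real.rpow_one]
  have hQ' : 1 / (2 * c ^ 2 * M ^ β) ≤ Q := by
    refine le_trans (one_div_le_one_div_of_le (by positivity) ?_) hQ
    calc c ^ 2 * N ^ β ≤ c ^ 2 * (2 * M ^ β) := by gcongr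
      _ = 2 * c ^ 2 * M ^ β := by ring
  have hinvM : 1 / M ≤ 1 / (4 * c ^ 2 * M ^ β) := by
    refine one_div_le_one_div_of_le (by positivity) ?_
    calc 4 * c ^ 2 * M ^ β ≤ M ^ (1 - β) * M ^ β := by gcongr
      _ = M := by rw [← Real.rpow_add hM0, sub_add_cancel, Real.rpow_one]
  have : 1 / (2 * c ^ 2 * M ^ β) - 1 / (4 * c ^ 2 * M ^ β) = 2 * (1 / (8 * c ^ 2 * M ^ β)) := by
    field_simp
    ring
  linarith

theorem stmt10_general (β : ℝ) (hβ : β ∈ Ioo (0 : ℝ) 1)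
    (H : ℝ → ℝ)
    (hpos : ∀ t ∈ Ico (0 : ℝ) 1, 0 ≤ H t)
    (c₁ : ℝ) (hc₁ : 1 ≤ c₁)
    (h : ∀ n : ℕ, 1 ≤ n → 1 / (c₁ * Real.sqrt ((n : ℝ) ^ β)) ≤ An (fun t => H t + 1) n) :
    ∃ c₂ : ℝ, 1 ≤ c₂ ∧ ∀ n : ℕ, 1 ≤ n → 1 / (c₂ * Real.sqrt ((n : ℝ) ^ β)) ≤ An H n := by
  have hc₁0 : 0 < c₁ := by linarith
  have hint₁ : IntervalIntegrable (fun s => (1 - s) * (H s + 1) ^ 2) volume 0 1 :=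
    intervalIntegrable_of_An_one_pos <| lt_of_lt_of_le (by simp [hc₁0]) (h 1 le_rfl)
  have hint := intervalIntegrable_one_sub_mul_sq_of_add_one hpos hint₁
  obtain ⟨n₀, hn₀β, hn₀⟩ : ∃ n₀ : ℕ, 4 * c₁ ^ 2 ≤ (n₀ : ℝ) ^ (1 - β) ∧ 1 ≤ n₀ :=
    (((tendsto_rpow_atTop (sub_pos.2 hβ.2)).comp tendsto_natCast_atTop_atTop).eventually_ge_atTop
      _).and (Filter.eventually_ge_atTop 1) |>.exists
  have hn₀' : (1 : ℝ) ≤ n₀ := by exact_mod_cast hn₀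
  refine ⟨√(8 * c₁ ^ 2 * n₀ ^ β), Real.one_le_sqrt.2 ?_, fun n hn => le_An hn fun τ hτ => ?_⟩
  · nlinarith [Real.one_le_rpow hn₀' hβ.1.le]
  have hn' : (1 : ℝ) ≤ n := by exact_mod_cast hn
  obtain ⟨N, t, ht, hmesh, hNM, hle⟩ := exists_fine_refinement hint hτ (M := n₀ * n) (by positivity)
  have hlow := (one_div_mul_sqrt_le_sqrt_iff hc₁0
    (Real.rpow_pos_of_pos (by exact_mod_cast ht.one_le) β)).1
    ((h N ht.one_le).trans (An_le_sqrt_partErr ht))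
  have hNM' : (N : ℝ) ≤ 2 * (n₀ * n) := by nlinarith
  have hM : 4 * c₁ ^ 2 ≤ ((n₀ : ℝ) * n) ^ (1 - β) := hn₀β.trans <|
    Real.rpow_le_rpow (by positivity) (le_mul_of_one_le_right (by positivity) hn')
      (sub_pos.2 hβ.2).le
  have hbound := one_div_le_of_le_two_mul_add hβ hc₁0 (by exact_mod_cast ht.one_le) hNM' hM hlow
    (partErr_add_one_le hint hint₁ ht hmesh)
  rw [one_div_mul_sqrt_le_sqrt_iff (by positivity) (by positivity), Real.sq_sqrt (by positivity)]
  calc 1 / (8 * c₁ ^ 2 * n₀ ^ β * n ^ β) = 1 / (8 * c₁ ^ 2 * (n₀ * n : ℝ) ^ β) := by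
        rw [Real.mul_rpow (by positivity) (by positivity), mul_assoc]
    _ ≤ partErr H n τ := hbound.trans hle

theorem stmt10 (β : ℝ) (hβ : β ∈ Ioo (0 : ℝ) 1)
    (H : ℝ → ℝ) (hmono : MonotoneOn H (Ico (0 : ℝ) 1))
    (hpos : ∀ t ∈ Ico (0 : ℝ) 1, 0 ≤ H t)
    (c₁ : ℝ) (hc₁ : 1 ≤ c₁)
    (h : ∀ n : ℕ, 1 ≤ n → 1 / (c₁ * Real.sqrt ((n : ℝ) ^ β)) ≤ An (fun t => H t + 1) n) :
    ∃ c₂ : ℝ, 1 ≤ c₂ ∧ ∀ n : ℕ, 1 ≤ n → 1 / (c₂ * Real.sqrt ((n : ℝ) ^ β)) ≤ An H n :=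
  stmt10_general β hβ H hpos c₁ hc₁ h
end

section
/- Let β > 1. There is a constant c ≥ 1 depending only on β such that for all integers n ≥ 2 and all t with e^{−1/n} < t ≤ e^{−1/(n+1)}, one has (1/c)·n² (log n)^{−β} ≤ 1 + ∑_{k=2}^∞ k(log k)^{−β} t^k ≤ c·n² (log n)^{−β}. -/
/-!
Write `A = (log n)^{-β}`. For the lower bound, the `n + 1` terms with `n ≤ k ≤ 2n` each satisfy
`t^k ≥ e^{-2}` and `k (log k)^{-β} ≥ 2^{-β} n A`. For the upper bound, every `k ≥ 2` satisfies
`k (log k)^{-β} ≲ A (k + n)`: if `k² ≥ n` then `log k ≥ (log n) / 2`, and otherwise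
`k ≤ √n ≲ n A` because `(log n)^β ≲ √n`. Summing `A (k + n) t^k` against `(1 - t)^{-1} ≤ n + 2`
gives `≲ A n²`.
-/

open Set

/-- The series `1 + ∑_{k=2}^∞ k (log k)^{−β} t^k` (indexed by `k = j + 2`). -/
noncomputable def logSeries (β t : ℝ) : ℝ :=
  1 + ∑' j : ℕ, ((j : ℝ) + 2) * (Real.log ((j : ℝ) + 2)) ^ (-β) * t ^ (j + 2)

open Real

lemma sqrt_le_mul_log_rpow_neg {β y : ℝ} (hβ : 0 < β) (hy : 1 < y) :
    √y ≤ (2 * β) ^ β * (y * log y ^ (-β)) := by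
  have hlog : 0 < log y := log_pos hy
  have hlog_le : log y ≤ 2 * β * y ^ (1 / (2 * β)) := by
    have := log_le_rpow_div (by linarith : 0 ≤ y) (by positivity : 0 < 1 / (2 * β))
    rwa [div_div_eq_mul_div, div_one, mul_comm] at this
  have hpow : log y ^ β ≤ (2 * β) ^ β * √y := by
    calc log y ^ β ≤ (2 * β * y ^ (1 / (2 * β))) ^ β := by gcongr
      _ = (2 * β) ^ β * √y := by
        rw [mul_rpow (by positivity) (by positivity), ← rpow_mul (by linarith),
          one_div_mul_eq_div, div_mul_cancel_right₀ hβ.ne', sqrt_eq_rpow, one_div]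
  have hcancel : log y ^ β * log y ^ (-β) = 1 := by
    rw [← rpow_add hlog, add_neg_cancel, rpow_zero]
  calc √y = √y * (log y ^ β * log y ^ (-β)) := by rw [hcancel, mul_one]
    _ ≤ √y * ((2 * β) ^ β * √y * log y ^ (-β)) := by gcongr
    _ = (2 * β) ^ β * (√y * √y * log y ^ (-β)) := by ring
    _ = (2 * β) ^ β * (y * log y ^ (-β)) := by rw [mul_self_sqrt (by linarith)]

lemma mul_log_rpow_neg_le_of_le_sq {β x y : ℝ} (hβ : 0 ≤ β) (hx : 0 ≤ x) (hy : 1 < y)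
    (hyx : y ≤ x ^ 2) : x * log x ^ (-β) ≤ 2 ^ β * log y ^ (-β) * x := by
  have hlogy : 0 < log y := log_pos hy
  have hlog : log y / 2 ≤ log x := by
    have := log_le_log (by linarith) hyx
    rw [log_pow, Nat.cast_ofNat] at this
    linarith
  calc x * log x ^ (-β) ≤ x * (log y / 2) ^ (-β) :=
        mul_le_mul_of_nonneg_left
          (rpow_le_rpow_of_nonpos (by positivity) hlog (by linarith)) hx
    _ = 2 ^ β * log y ^ (-β) * x := by
        rw [div_rpow hlogy.le zero_le_two, rpow_neg zero_le_two, div_inv_eq_mul]; ring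

lemma mul_log_rpow_neg_le_of_sq_le {β x y : ℝ} (hβ : 0 < β) (hx : 2 ≤ x) (hy : 1 < y)
    (hxy : x ^ 2 ≤ y) : x * log x ^ (-β) ≤ log 2 ^ (-β) * (2 * β) ^ β * log y ^ (-β) * y :=
  calc x * log x ^ (-β) ≤ √y * log 2 ^ (-β) :=
        mul_le_mul (le_sqrt_of_sq_le hxy)
          (rpow_le_rpow_of_nonpos (log_pos one_lt_two) (log_le_log two_pos hx) (by linarith))
          (rpow_nonneg (log_nonneg (by linarith)) _) (sqrt_nonneg y)
    _ ≤ (2 * β) ^ β * (y * log y ^ (-β)) * log 2 ^ (-β) := by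
        gcongr; exact sqrt_le_mul_log_rpow_neg hβ hy
    _ = _ := by ring

lemma mul_log_rpow_neg_le {β x y : ℝ} (hβ : 0 < β) (hx : 2 ≤ x) (hy : 1 < y) :
    x * log x ^ (-β) ≤ (2 ^ β + log 2 ^ (-β) * (2 * β) ^ β) * log y ^ (-β) * (x + y) := by
  have : 0 < log y := log_pos hy
  rcases le_total y (x ^ 2) with hyx | hxy
  · calc x * log x ^ (-β) ≤ 2 ^ β * log y ^ (-β) * x :=
          mul_log_rpow_neg_le_of_le_sq hβ.le (by linarith) hy hyx
      _ ≤ (2 ^ β + log 2 ^ (-β) * (2 * β) ^ β) * log y ^ (-β) * (x + y) := by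
          gcongr
          · exact le_add_of_nonneg_right (by positivity)
          · linarith
  · calc x * log x ^ (-β) ≤ log 2 ^ (-β) * (2 * β) ^ β * log y ^ (-β) * y :=
          mul_log_rpow_neg_le_of_sq_le hβ hx hy hxy
      _ ≤ (2 ^ β + log 2 ^ (-β) * (2 * β) ^ β) * log y ^ (-β) * (x + y) := by
          gcongr
          · exact le_add_of_nonneg_left (by positivity)
          · linarith

lemma le_mul_log_rpow_neg {β x y : ℝ} (hβ : 0 ≤ β) (hy : 2 ≤ y) (hyx : y ≤ x)
    (hxy : x ≤ 2 * y) : 2 ^ (-β) * (y * log y ^ (-β)) ≤ x * log x ^ (-β) := by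
  have hlogx : 0 < log x := log_pos (by linarith)
  have hlog : log x ≤ 2 * log y := by
    calc log x ≤ log (2 * y) := log_le_log (by linarith) hxy
      _ = log 2 + log y := log_mul two_ne_zero (by linarith)
      _ ≤ 2 * log y := by linarith [log_le_log two_pos hy]
  calc 2 ^ (-β) * (y * log y ^ (-β)) = y * (2 * log y) ^ (-β) := by
        rw [mul_rpow zero_le_two (by linarith [log_pos (by linarith : (1:ℝ) < y)])]; ring
    _ ≤ x * log x ^ (-β) :=
      mul_le_mul hyx (rpow_le_rpow_of_nonpos hlogx hlog (by linarith))
        (rpow_nonneg (by linarith) _)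
        (by linarith)

lemma exp_neg_inv_le_div {m : ℝ} (hm : 0 < m) : exp (-1 / m) ≤ m / (m + 1) := by
  calc exp (-1 / m) = (exp (1 / m))⁻¹ := by rw [neg_div, exp_neg]
    _ ≤ (1 / m + 1)⁻¹ := by gcongr; exact add_one_le_exp _
    _ = m / (m + 1) := by field_simp; ring

lemma hasSum_add_mul_geometric {t : ℝ} (ht : ‖t‖ < 1) (a : ℝ) :
    HasSum (fun j : ℕ => ((j : ℝ) + a) * t ^ j) (t / (1 - t) ^ 2 + a * (1 - t)⁻¹) := by
  simpa only [add_mul] using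
    (hasSum_coe_mul_geometric_of_norm_lt_one ht).add
      ((hasSum_geometric_of_norm_lt_one ht).mul_left a)

lemma exp_neg_mul_inv_le_pow {m t : ℝ} (ht : exp (-1 / m) ≤ t) (k : ℕ) :
    exp (-k / m) ≤ t ^ k := by
  calc exp (-k / m) = exp (-1 / m) ^ k := by rw [← exp_nat_mul]; ring_nf
    _ ≤ t ^ k := pow_le_pow_left₀ (exp_pos _).le ht k

lemma one_sub_inv_le_of_le_exp_neg_inv {m t : ℝ} (hm : 0 < m) (ht : t ≤ exp (-1 / m)) :
    t < 1 ∧ (1 - t)⁻¹ ≤ m + 1 := by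
  have ht' : t ≤ m / (m + 1) := ht.trans (exp_neg_inv_le_div hm)
  have hsub : 1 / (m + 1) ≤ 1 - t := by
    have : m / (m + 1) + 1 / (m + 1) = 1 := by field_simp
    linarith
  refine ⟨by linarith [show 0 < 1 / (m + 1) by positivity], ?_⟩
  calc (1 - t)⁻¹ ≤ (1 / (m + 1))⁻¹ := by gcongr
    _ = m + 1 := by rw [one_div, inv_inv]

noncomputable def logSeriesTerm (β t : ℝ) (j : ℕ) : ℝ :=
  ((j : ℝ) + 2) * log ((j : ℝ) + 2) ^ (-β) * t ^ (j + 2)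

section LogSeries

variable {β t : ℝ}

lemma logSeries_eq_one_add_tsum (β t : ℝ) : logSeries β t = 1 + ∑' j, logSeriesTerm β t j := rfl

lemma two_le_natCast_add_two (j : ℕ) : (2 : ℝ) ≤ j + 2 := by
  linarith [(Nat.cast_nonneg j : (0 : ℝ) ≤ j)]

lemma logSeriesTerm_nonneg (ht : 0 ≤ t) (j : ℕ) : 0 ≤ logSeriesTerm β t j := by
  have := two_le_natCast_add_two j
  have : 0 ≤ log ((j : ℝ) + 2) := log_nonneg (by linarith)
  unfold logSeriesTerm
  positivity

lemma logSeriesTerm_le (hβ : 0 < β) {y : ℝ} (hy : 1 < y) (ht0 : 0 ≤ t) (ht1 : t ≤ 1) (j : ℕ) :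
    logSeriesTerm β t j ≤
      (2 ^ β + log 2 ^ (-β) * (2 * β) ^ β) * log y ^ (-β) * (((j : ℝ) + (y + 2)) * t ^ j) := by
  have hj := two_le_natCast_add_two j
  have hK : 0 ≤ (2 ^ β + log 2 ^ (-β) * (2 * β) ^ β) * log y ^ (-β) * ((j : ℝ) + 2 + y) := by
    have : 0 < log y := log_pos hy
    have : 0 ≤ (j : ℝ) + 2 + y := by linarith
    positivity
  calc logSeriesTerm β t j
      ≤ (2 ^ β + log 2 ^ (-β) * (2 * β) ^ β) * log y ^ (-β) * ((j : ℝ) + 2 + y) * t ^ (j + 2) :=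
        mul_le_mul_of_nonneg_right (mul_log_rpow_neg_le hβ hj hy) (by positivity)
    _ ≤ (2 ^ β + log 2 ^ (-β) * (2 * β) ^ β) * log y ^ (-β) * ((j : ℝ) + 2 + y) * t ^ j :=
        mul_le_mul_of_nonneg_left (pow_le_pow_of_le_one ht0 ht1 (by omega)) hK
    _ = _ := by ring

lemma summable_logSeriesTerm (hβ : 0 < β) (ht0 : 0 ≤ t) (ht1 : t < 1) :
    Summable (logSeriesTerm β t) :=
  .of_nonneg_of_le (logSeriesTerm_nonneg ht0) (logSeriesTerm_le hβ one_lt_two ht0 ht1.le)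
    ((hasSum_add_mul_geometric (by rwa [norm_of_nonneg ht0]) _).summable.mul_left _)

lemma logSeries_le (hβ : 0 < β) {n : ℕ} (hn : 2 ≤ n) (ht0 : 0 ≤ t)
    (ht : t ≤ exp (-1 / ((n : ℝ) + 1))) :
    logSeries β t ≤
      ((2 * β) ^ β + 8 * (2 ^ β + log 2 ^ (-β) * (2 * β) ^ β)) * ((n : ℝ) ^ 2 * log n ^ (-β)) := by
  set K := 2 ^ β + log 2 ^ (-β) * (2 * β) ^ β
  set A := log (n : ℝ) ^ (-β)
  have hn' : (2 : ℝ) ≤ n := by exact_mod_cast hn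
  have hA : 0 < A := rpow_pos_of_pos (log_pos (by linarith)) _
  have hK : 0 ≤ K := by positivity
  obtain ⟨ht1, hinv⟩ := one_sub_inv_le_of_le_exp_neg_inv (by positivity) ht
  have hinv0 : 0 ≤ (1 - t)⁻¹ := inv_nonneg.2 (by linarith)
  have hone : 1 ≤ (2 * β) ^ β * (n ^ 2 * A) :=
    calc (1 : ℝ) ≤ √(n : ℝ) := one_le_sqrt.2 (by linarith)
      _ ≤ (2 * β) ^ β * (n * A) := sqrt_le_mul_log_rpow_neg hβ (by linarith)
      _ ≤ (2 * β) ^ β * (n ^ 2 * A) := by gcongr; nlinarith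
  have hgeom : t / (1 - t) ^ 2 + ((n : ℝ) + 2) * (1 - t)⁻¹ ≤ 8 * n ^ 2 :=
    calc t / (1 - t) ^ 2 + ((n : ℝ) + 2) * (1 - t)⁻¹
        ≤ (1 - t)⁻¹ ^ 2 + ((n : ℝ) + 2) * (1 - t)⁻¹ := by
          gcongr ?_ + _
          rw [inv_pow, ← one_div]
          exact div_le_div_of_nonneg_right ht1.le (sq_nonneg _)
      _ ≤ ((n : ℝ) + 1 + 1) ^ 2 + ((n : ℝ) + 2) * ((n : ℝ) + 1 + 1) := by gcongr
      _ ≤ 8 * n ^ 2 := by nlinarith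
  have hsum : ∑' j, logSeriesTerm β t j ≤ K * A * (8 * n ^ 2) :=
    calc ∑' j, logSeriesTerm β t j ≤ ∑' j : ℕ, K * A * (((j : ℝ) + (n + 2)) * t ^ j) :=
          (summable_logSeriesTerm hβ ht0 ht1).tsum_le_tsum
            (logSeriesTerm_le hβ (by linarith) ht0 ht1.le)
            ((hasSum_add_mul_geometric (by rwa [norm_of_nonneg ht0]) _).summable.mul_left _)
      _ = K * A * (t / (1 - t) ^ 2 + ((n : ℝ) + 2) * (1 - t)⁻¹) := by
          rw [tsum_mul_left, (hasSum_add_mul_geometric (by rwa [norm_of_nonneg ht0]) _).tsum_eq]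
      _ ≤ K * A * (8 * n ^ 2) := by gcongr
  rw [logSeries_eq_one_add_tsum]
  linarith

lemma le_logSeries (hβ : 0 < β) {n : ℕ} (hn : 2 ≤ n) (ht : exp (-1 / (n : ℝ)) ≤ t)
    (ht1 : t < 1) :
    (exp 2 * 2 ^ β)⁻¹ * ((n : ℝ) ^ 2 * log n ^ (-β)) ≤ logSeries β t := by
  set A := log (n : ℝ) ^ (-β)
  have hn' : (2 : ℝ) ≤ n := by exact_mod_cast hn
  have ht0 : 0 ≤ t := (exp_pos _).le.trans ht
  have hterm : ∀ j ∈ Finset.Icc (n - 2) (2 * n - 2),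
      exp (-2) * (2 ^ (-β) * (n * A)) ≤ logSeriesTerm β t j := by
    intro j hj
    rw [Finset.mem_Icc] at hj
    have hlo : (n : ℝ) ≤ j + 2 := by exact_mod_cast (show n ≤ j + 2 by omega)
    have hhi : (j : ℝ) + 2 ≤ 2 * n := by exact_mod_cast (show j + 2 ≤ 2 * n by omega)
    have hpow : exp (-2) ≤ t ^ (j + 2) :=
      calc exp (-2) ≤ exp (-((j + 2 : ℕ) : ℝ) / n) := by
            gcongr; rw [le_div_iff₀ (by positivity)]; push_cast; linarith
        _ ≤ t ^ (j + 2) := exp_neg_mul_inv_le_pow ht _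
    rw [logSeriesTerm, mul_comm (exp (-2))]
    exact mul_le_mul (le_mul_log_rpow_neg hβ.le hn' hlo hhi) hpow (exp_pos _).le
      (by
        have := two_le_natCast_add_two j
        have : 0 ≤ log ((j : ℝ) + 2) := log_nonneg (by linarith)
        positivity)
  have hcard : ((Finset.Icc (n - 2) (2 * n - 2)).card : ℝ) = n + 1 := by
    rw [Nat.card_Icc]; norm_cast; omega
  have hconst : (exp 2 * 2 ^ β)⁻¹ = exp (-2) * 2 ^ (-β) := by
    rw [mul_inv, exp_neg, rpow_neg zero_le_two]
  have hA : 0 ≤ A := rpow_nonneg (log_nonneg (by linarith)) _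
  calc (exp 2 * 2 ^ β)⁻¹ * ((n : ℝ) ^ 2 * A)
      ≤ (n + 1) * (exp (-2) * (2 ^ (-β) * (n * A))) := by
        rw [hconst]
        have : 0 ≤ exp (-2) * 2 ^ (-β) * (n * A) := by positivity
        nlinarith
    _ ≤ ∑ j ∈ Finset.Icc (n - 2) (2 * n - 2), logSeriesTerm β t j := by
        rw [← hcard, ← nsmul_eq_mul]; exact Finset.card_nsmul_le_sum _ _ _ hterm
    _ ≤ ∑' j, logSeriesTerm β t j :=
        (summable_logSeriesTerm hβ ht0 ht1).sum_le_tsum _ fun j _ => logSeriesTerm_nonneg ht0 j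
    _ ≤ logSeries β t := by rw [logSeries_eq_one_add_tsum]; linarith

end LogSeries

theorem stmt17 (β : ℝ) (hβ : 1 < β) :
    ∃ c : ℝ, 1 ≤ c ∧ ∀ n : ℕ, 2 ≤ n → ∀ t : ℝ,
      Real.exp (-1 / (n : ℝ)) < t → t ≤ Real.exp (-1 / ((n : ℝ) + 1)) →
      (1 / c) * ((n : ℝ) ^ 2 * (Real.log n) ^ (-β)) ≤ logSeries β t ∧
        logSeries β t ≤ c * ((n : ℝ) ^ 2 * (Real.log n) ^ (-β)) := by
  have hβ0 : 0 < β := by linarith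
  set c₁ := exp 2 * 2 ^ β
  set c₂ := (2 * β) ^ β + 8 * (2 ^ β + log 2 ^ (-β) * (2 * β) ^ β)
  have hc₁ : 1 ≤ c₁ :=
    one_le_mul_of_one_le_of_one_le (one_le_exp zero_le_two) (one_le_rpow one_le_two hβ0.le)
  have hc₂ : 0 ≤ c₂ := by positivity
  refine ⟨c₁ + c₂, by linarith, fun n hn t ht₁ ht₂ => ?_⟩
  have hX : 0 ≤ (n : ℝ) ^ 2 * log n ^ (-β) := by
    have : 0 ≤ log (n : ℝ) := log_nonneg (by exact_mod_cast (show 1 ≤ n by omega))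
    positivity
  constructor
  · calc 1 / (c₁ + c₂) * ((n : ℝ) ^ 2 * log n ^ (-β))
        ≤ c₁⁻¹ * ((n : ℝ) ^ 2 * log n ^ (-β)) := by
          rw [one_div]; gcongr; linarith
      _ ≤ logSeries β t :=
          le_logSeries hβ0 hn ht₁.le (one_sub_inv_le_of_le_exp_neg_inv (by positivity) ht₂).1
  · calc logSeries β t ≤ c₂ * ((n : ℝ) ^ 2 * log n ^ (-β)) :=
          logSeries_le hβ0 hn ((exp_pos _).le.trans ht₁.le) ht₂
      _ ≤ (c₁ + c₂) * ((n : ℝ) ^ 2 * log n ^ (-β)) := by gcongr; linarith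
end
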